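/- Let P_ε: Vect^{(εℤ,≤)} → Vect^{(ℝ,≤)} be the extension functor given by precomposition with p_ε(a) = ⌊a/ε⌋·ε. Then for any persistence module F: (ℝ,≤) → Vect, the modules F and P_ε(I_ε(F)) are ε-interleaved, where I_ε is restriction to εℤ. -/

import Mathlib

/-- A persistence module indexed by `(ℝ, ≤)` with values in `k`-vector spaces. -/
structure RPersMod (k : Type*) [Field k] where
  V : ℝ → Type*
  [grp : ∀ x, AddCommGroup (V x)]
  [mod : ∀ x, Module k (V x)]
  map : ∀ {x y : ℝ}, x ≤ y → (V x →ₗ[k] V y)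
  map_id : ∀ x : ℝ, map (le_refl x) = LinearMap.id
  map_comp : ∀ {x y z : ℝ} (hxy : x ≤ y) (hyz : y ≤ z),
    (map hyz).comp (map hxy) = map (hxy.trans hyz)

attribute [instance] RPersMod.grp RPersMod.mod

/-- A `δ`-interleaving of real-indexed persistence modules: a pair of natural
transformations shifting by `δ ≥ 0` whose composites are the `2δ` structure maps. -/
structure RItl {k : Type*} [Field k] (F G : RPersMod k) (δ : ℝ) where
  nonneg : 0 ≤ δ
  φ : ∀ x : ℝ, F.V x →ₗ[k] G.V (x + δ)
  ψ : ∀ x : ℝ, G.V x →ₗ[k] F.V (x + δ)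
  φ_natural : ∀ {x y : ℝ} (h : x ≤ y),
    (φ y).comp (F.map h) = (G.map (by linarith : x + δ ≤ y + δ)).comp (φ x)
  ψ_natural : ∀ {x y : ℝ} (h : x ≤ y),
    (ψ y).comp (G.map h) = (F.map (by linarith : x + δ ≤ y + δ)).comp (ψ x)
  comp_φψ : ∀ x : ℝ, (ψ (x + δ)).comp (φ x) = F.map (by linarith : x ≤ x + δ + δ)
  comp_ψφ : ∀ x : ℝ, (φ (x + δ)).comp (ψ x) = G.map (by linarith : x ≤ x + δ + δ)

/-- The interleaving distance between real-indexed persistence modules. -/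
noncomputable def rDist {k : Type*} [Field k] (F G : RPersMod k) : ℝ :=
  sInf {δ : ℝ | Nonempty (RItl F G δ)}

/-- A persistence module indexed by `(ℤ, ≤)` (representing an `εℤ`-indexed module). -/
structure ZPersMod (k : Type*) [Field k] where
  V : ℤ → Type*
  [grp : ∀ n, AddCommGroup (V n)]
  [mod : ∀ n, Module k (V n)]
  map : ∀ {m n : ℤ}, m ≤ n → (V m →ₗ[k] V n)
  map_id : ∀ n : ℤ, map (le_refl n) = LinearMap.id
  map_comp : ∀ {m n p : ℤ} (hmn : m ≤ n) (hnp : n ≤ p),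
    (map hnp).comp (map hmn) = map (hmn.trans hnp)

attribute [instance] ZPersMod.grp ZPersMod.mod

/-- An interleaving of `ℤ`-indexed modules with shift `n` steps (i.e. `nε` for
an `εℤ`-indexed module). -/
structure ZItl {k : Type*} [Field k] (M N : ZPersMod k) (n : ℕ) where
  φ : ∀ j : ℤ, M.V j →ₗ[k] N.V (j + n)
  ψ : ∀ j : ℤ, N.V j →ₗ[k] M.V (j + n)
  φ_natural : ∀ {i j : ℤ} (h : i ≤ j),
    (φ j).comp (M.map h) = (N.map (by omega : (i : ℤ) + (n : ℤ) ≤ j + (n : ℤ))).comp (φ i)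
  ψ_natural : ∀ {i j : ℤ} (h : i ≤ j),
    (ψ j).comp (N.map h) = (M.map (by omega : (i : ℤ) + (n : ℤ) ≤ j + (n : ℤ))).comp (ψ i)
  comp_φψ : ∀ j : ℤ, (ψ (j + n)).comp (φ j)
      = M.map (by omega : (j : ℤ) ≤ j + (n : ℤ) + (n : ℤ))
  comp_ψφ : ∀ j : ℤ, (φ (j + n)).comp (ψ j)
      = N.map (by omega : (j : ℤ) ≤ j + (n : ℤ) + (n : ℤ))

/-- The interleaving distance between `εℤ`-indexed persistence modules, as a
real number: the infimum of the shifts `ε·n` over all interleavings. -/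
noncomputable def zDist {k : Type*} [Field k] (ε : ℝ) (M N : ZPersMod k) : ℝ :=
  sInf {δ : ℝ | ∃ n : ℕ, δ = ε * n ∧ Nonempty (ZItl M N n)}

/-- `I_ε(F)`: the restriction of a real-indexed persistence module to the
subposet `εℤ` (indexed by `ℤ`, with `n` corresponding to `ε·n ∈ εℤ`). -/
def restrictPM {k : Type*} [Field k] (ε : ℝ) (hε : 0 < ε) (F : RPersMod k) :
    ZPersMod k where
  V n := F.V (ε * n)
  map {m n} h := F.map (by
    have : (m : ℝ) ≤ n := by exact_mod_cast h
    nlinarith)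
  map_id n := F.map_id _
  map_comp hmn hnp := F.map_comp _ _

/-- `P_ε(M)`: the extension of an `εℤ`-indexed persistence module to `ℝ` by
precomposition with `p_ε(a) = ⌊a/ε⌋·ε`. -/
noncomputable def extendPM {k : Type*} [Field k] (ε : ℝ) (hε : 0 < ε) (M : ZPersMod k) :
    RPersMod k where
  V x := M.V ⌊x / ε⌋
  map {x y} h := M.map (Int.floor_le_floor (by
    gcongr))
  map_id x := M.map_id _
  map_comp hxy hyz := M.map_comp _ _

/-!
Since `ε ⌊x/ε⌋ ≤ x ≤ ε ⌊(x + ε)/ε⌋` and `ε ⌊x/ε⌋ ≤ x + ε`, both interleaving maps can be taken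
to be structure maps of `F` itself. All the interleaving identities then compare composites of
structure maps of `F` with the same endpoints, and these agree because `F` is a functor on a
poset.
-/

lemma RPersMod.map_comp_comm {k : Type*} [Field k] (F : RPersMod k) {a b b' c : ℝ}
    (hab : a ≤ b) (hbc : b ≤ c) (hab' : a ≤ b') (hb'c : b' ≤ c) :
    (F.map hbc).comp (F.map hab) = (F.map hb'c).comp (F.map hab') := by
  rw [F.map_comp, F.map_comp]

lemma mul_floor_div_le {ε : ℝ} (hε : 0 < ε) (x : ℝ) : ε * ⌊x / ε⌋ ≤ x := by
  calc ε * ⌊x / ε⌋ ≤ ε * (x / ε) := by gcongr; exact Int.floor_le _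
    _ = x := mul_div_cancel₀ x hε.ne'

lemma le_mul_floor_add_div {ε : ℝ} (hε : 0 < ε) (x : ℝ) : x ≤ ε * ⌊(x + ε) / ε⌋ := by
  have hfloor : ⌊(x + ε) / ε⌋ = ⌊x / ε⌋ + 1 := by
    rw [add_div, div_self hε.ne', Int.floor_add_one]
  calc x = ε * (x / ε) := (mul_div_cancel₀ x hε.ne').symm
    _ ≤ ε * ⌊(x + ε) / ε⌋ := by
      gcongr
      rw [hfloor]
      push_cast
      exact (Int.lt_floor_add_one _).le

/-- `F` and `P_ε(I_ε(F))` are `ε`-interleaved. -/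
theorem extend_restrict_interleaved {k : Type*} [Field k] (ε : ℝ) (hε : 0 < ε)
    (F : RPersMod k) :
    Nonempty (RItl F (extendPM ε hε (restrictPM ε hε F)) ε) :=
  ⟨{ nonneg := hε.le
     φ := fun x => F.map (le_mul_floor_add_div hε x)
     ψ := fun x => F.map ((mul_floor_div_le hε x).trans (le_add_of_nonneg_right hε.le))
     φ_natural := fun _ => F.map_comp_comm _ _ _ _
     ψ_natural := fun _ => F.map_comp_comm _ _ _ _
     comp_φψ := fun _ => F.map_comp _ _
     comp_ψφ := fun _ => F.map_comp _ _ }⟩
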